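/- arXiv:1304.5602 — 7 statements merged into one kernel-verified Lean document; each statement's English description precedes it below -/
import Mathlib

section
/- Let Z be a comparison between interpretations I and I' extended with the ∃r.Self condition: Z(x,x') and r^I(x,x) imply r^{I'}(x',x'). Then semi-positive concepts extended with constructors ∃r.Self are preserved by Z: if Z(x,x') and x ∈ C^I then x' ∈ C^{I'}. -/
structure Interp (CN RN : Type) (D : Type) where
  cI : CN → D → Prop
  rI : RN → D → D → Prop

/-- Semi-positive concepts extended with `∃r.Self`. -/
inductive SPS (CN RN : Type) : Type where
  | top : SPS CN RN
  | bot : SPS CN RN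
  | atom : CN → SPS CN RN
  | selfC : RN → SPS CN RN
  | or : SPS CN RN → SPS CN RN → SPS CN RN
  | and : SPS CN RN → SPS CN RN → SPS CN RN
  | ex : RN → SPS CN RN → SPS CN RN
  | all : RN → SPS CN RN → SPS CN RN

def SPS.sem {CN RN D : Type} (I : Interp CN RN D) : SPS CN RN → D → Prop
  | .top => fun _ => True
  | .bot => fun _ => False
  | .atom A => I.cI A
  | .selfC r => fun x => I.rI r x x
  | .or C₁ C₂ => fun x => C₁.sem I x ∨ C₂.sem I x
  | .and C₁ C₂ => fun x => C₁.sem I x ∧ C₂.sem I x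
  | .ex r C => fun x => ∃ y, I.rI r x y ∧ C.sem I y
  | .all r C => fun x => ∀ y, I.rI r x y → C.sem I y

/-- A comparison extended with the `Self` condition. -/
def IsComparisonSelf {CN RN D D' : Type} (I : Interp CN RN D) (I' : Interp CN RN D')
    (Z : D → D' → Prop) : Prop :=
  (∀ A x x', Z x x' → I.cI A x → I'.cI A x') ∧
  (∀ r x x' y, Z x x' → I.rI r x y → ∃ y', Z y y' ∧ I'.rI r x' y') ∧
  (∀ r x x' y', Z x x' → I'.rI r x' y' → ∃ y, Z y y' ∧ I.rI r x y) ∧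
  (∀ r x x', Z x x' → I.rI r x x → I'.rI r x' x')

theorem sps_preserved_general {CN RN D D' : Type}
    (I : Interp CN RN D) (I' : Interp CN RN D') (Z : D → D' → Prop)
    (hZ : IsComparisonSelf I I' Z) :
    ∀ (C : SPS CN RN) (x : D) (x' : D'), Z x x' → C.sem I x → C.sem I' x' := by
  obtain ⟨hatom, hforth, hback, hself⟩ := hZ
  intro C
  induction C with
  | top => exact fun _ _ _ _ => trivial
  | bot => exact fun _ _ _ h => h.elim
  | atom A => exact hatom A
  | selfC r => exact hself r
  | or C₁ C₂ ih₁ ih₂ => exact fun x x' hz h => h.imp (ih₁ x x' hz) (ih₂ x x' hz)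
  | and C₁ C₂ ih₁ ih₂ => exact fun x x' hz h => ⟨ih₁ x x' hz h.1, ih₂ x x' hz h.2⟩
  | ex r C ih =>
    rintro x x' hz ⟨y, hxy, hy⟩
    obtain ⟨y', hzy, hxy'⟩ := hforth r x x' y hz hxy
    exact ⟨y', hxy', ih y y' hzy hy⟩
  | all r C ih =>
    intro x x' hz h y' hxy'
    obtain ⟨y, hzy, hxy⟩ := hback r x x' y' hz hxy'
    exact ih y y' hzy (h y hxy)

/-- Comparisons with the `Self` condition preserve semi-positive concepts
extended with `∃r.Self`. -/
theorem sps_preserved {CN RN D D' : Type} [Nonempty D] [Nonempty D']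
    (I : Interp CN RN D) (I' : Interp CN RN D') (Z : D → D' → Prop)
    (hZ : IsComparisonSelf I I' Z) :
    ∀ (C : SPS CN RN) (x : D) (x' : D'), Z x x' → C.sem I x → C.sem I' x' :=
  sps_preserved_general I I' Z hZ
end

section
/- Let Z be a comparison between interpretations I and I' satisfying the universal-role conditions: for every x ∈ Δ^I there is x' ∈ Δ^{I'} with Z(x,x'), and for every x' ∈ Δ^{I'} there is x ∈ Δ^I with Z(x,x'). Then semi-positive concepts extended with ∃U.C and ∀U.C (the universal role) are preserved by Z. -/
/-- Semi-positive concepts extended with the universal role `U`. -/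
inductive SPU (CN RN : Type) : Type where
  | top : SPU CN RN
  | bot : SPU CN RN
  | atom : CN → SPU CN RN
  | or : SPU CN RN → SPU CN RN → SPU CN RN
  | and : SPU CN RN → SPU CN RN → SPU CN RN
  | ex : RN → SPU CN RN → SPU CN RN
  | all : RN → SPU CN RN → SPU CN RN
  | exU : SPU CN RN → SPU CN RN
  | allU : SPU CN RN → SPU CN RN

def SPU.sem {CN RN D : Type} (I : Interp CN RN D) : SPU CN RN → D → Prop
  | .top => fun _ => True
  | .bot => fun _ => False
  | .atom A => I.cI A
  | .or C₁ C₂ => fun x => C₁.sem I x ∨ C₂.sem I x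
  | .and C₁ C₂ => fun x => C₁.sem I x ∧ C₂.sem I x
  | .ex r C => fun x => ∃ y, I.rI r x y ∧ C.sem I y
  | .all r C => fun x => ∀ y, I.rI r x y → C.sem I y
  | .exU C => fun _ => ∃ y, C.sem I y
  | .allU C => fun _ => ∀ y, C.sem I y

/-- A comparison extended with the universal-role conditions. -/
def IsComparisonU {CN RN D D' : Type} (I : Interp CN RN D) (I' : Interp CN RN D')
    (Z : D → D' → Prop) : Prop :=
  (∀ A x x', Z x x' → I.cI A x → I'.cI A x') ∧
  (∀ r x x' y, Z x x' → I.rI r x y → ∃ y', Z y y' ∧ I'.rI r x' y') ∧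
  (∀ r x x' y', Z x x' → I'.rI r x' y' → ∃ y, Z y y' ∧ I.rI r x y) ∧
  (∀ x, ∃ x', Z x x') ∧
  (∀ x', ∃ x, Z x x')

/- Induction on the concept. The universal-role cases are the role cases for the total relation
`U = D × D`: totality of `Z` in each direction plays the part of the forth and back conditions. -/
theorem spu_preserved_general {CN RN D D' : Type}
    (I : Interp CN RN D) (I' : Interp CN RN D') (Z : D → D' → Prop)
    (hZ : IsComparisonU I I' Z) :
    ∀ (C : SPU CN RN) (x : D) (x' : D'), Z x x' → C.sem I x → C.sem I' x' := by
  obtain ⟨hatom, hforth, hback, htotal, hsurj⟩ := hZ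
  intro C
  induction C with
  | top => exact fun _ _ _ _ => trivial
  | bot => exact fun _ _ _ h => h
  | atom A => exact hatom A
  | or C₁ C₂ ih₁ ih₂ => exact fun x x' hx => Or.imp (ih₁ x x' hx) (ih₂ x x' hx)
  | and C₁ C₂ ih₁ ih₂ => exact fun x x' hx => And.imp (ih₁ x x' hx) (ih₂ x x' hx)
  | ex r C ih =>
    rintro x x' hx ⟨y, hxy, hy⟩
    obtain ⟨y', hy', hxy'⟩ := hforth r x x' y hx hxy
    exact ⟨y', hxy', ih y y' hy' hy⟩
  | all r C ih =>
    intro x x' hx h y' hxy'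
    obtain ⟨y, hy', hxy⟩ := hback r x x' y' hx hxy'
    exact ih y y' hy' (h y hxy)
  | exU C ih =>
    rintro - - - ⟨y, hy⟩
    obtain ⟨y', hy'⟩ := htotal y
    exact ⟨y', ih y y' hy' hy⟩
  | allU C ih =>
    intro _ _ _ h y'
    obtain ⟨y, hy'⟩ := hsurj y'
    exact ih y y' hy' (h y)

/-- Comparisons with the universal-role conditions preserve semi-positive
concepts extended with `∃U.C` and `∀U.C`. -/
theorem spu_preserved {CN RN D D' : Type} [Nonempty D] [Nonempty D']
    (I : Interp CN RN D) (I' : Interp CN RN D') (Z : D → D' → Prop)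
    (hZ : IsComparisonU I I' Z) :
    ∀ (C : SPU CN RN) (x : D) (x' : D'), Z x x' → C.sem I x → C.sem I' x' :=
  spu_preserved_general I I' Z hZ
end

section
/- Let Z be a comparison between interpretations I and I' satisfying the counting condition: whenever Z(x,x') and r is a role name, there exists a bijection h from {y | r^I(x,y)} to {y' | r^{I'}(x',y')} with h ⊆ Z (as a set of pairs). Then concepts of the form (≥ n r.C) with C semi-positive are preserved by Z: if Z(x,x') and x has at least n distinct r-successors in C^I, then x' has at least n distinct r-successors in C^{I'}. -/
inductive SP (CN RN : Type) : Type where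
  | top : SP CN RN
  | bot : SP CN RN
  | atom : CN → SP CN RN
  | or : SP CN RN → SP CN RN → SP CN RN
  | and : SP CN RN → SP CN RN → SP CN RN
  | ex : RN → SP CN RN → SP CN RN
  | all : RN → SP CN RN → SP CN RN

def SP.sem {CN RN D : Type} (I : Interp CN RN D) : SP CN RN → D → Prop
  | .top => fun _ => True
  | .bot => fun _ => False
  | .atom A => I.cI A
  | .or C₁ C₂ => fun x => C₁.sem I x ∨ C₂.sem I x
  | .and C₁ C₂ => fun x => C₁.sem I x ∧ C₂.sem I x
  | .ex r C => fun x => ∃ y, I.rI r x y ∧ C.sem I y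
  | .all r C => fun x => ∀ y, I.rI r x y → C.sem I y

/-- `S` has at least `n` distinct elements. -/
def AtLeast {α : Type} (n : ℕ) (S : Set α) : Prop :=
  ∃ f : Fin n ↪ α, ∀ i, f i ∈ S

/-- A comparison satisfying, in addition, the counting condition: for any
`Z`-related points and any role name, there is a bijection `h ⊆ Z` between
the successor sets. -/
def IsComparisonQ {CN RN D D' : Type} (I : Interp CN RN D) (I' : Interp CN RN D')
    (Z : D → D' → Prop) : Prop :=
  (∀ A x x', Z x x' → I.cI A x → I'.cI A x') ∧
  (∀ r x x' y, Z x x' → I.rI r x y → ∃ y', Z y y' ∧ I'.rI r x' y') ∧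
  (∀ r x x' y', Z x x' → I'.rI r x' y' → ∃ y, Z y y' ∧ I.rI r x y) ∧
  (∀ (r : RN) x x', Z x x' →
    ∃ h : {y // I.rI r x y} ≃ {y' // I'.rI r x' y'}, ∀ y, Z y.1 (h y).1)

theorem AtLeast.of_embedding {α β : Type} {n : ℕ} {S : Set α} {T : Set β} (g : S ↪ T)
    (hS : AtLeast n S) : AtLeast n T := by
  obtain ⟨f, hf⟩ := hS
  let f' : Fin n ↪ S := ⟨fun i => ⟨f i, hf i⟩, fun i j hij => f.injective congr($hij.1)⟩
  exact ⟨(f'.trans g).trans (Function.Embedding.subtype _), fun i => ((f'.trans g) i).2⟩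

def Function.Embedding.restrictAnd {α β : Type} {p q : α → Prop} {p' q' : β → Prop}
    (e : {y // p y} ↪ {y' // p' y'}) (he : ∀ y, q y.1 → q' (e y).1) :
    {y | p y ∧ q y} ↪ {y' | p' y' ∧ q' y'} where
  toFun y := ⟨e ⟨y, y.2.1⟩, (e ⟨y, y.2.1⟩).2, he _ y.2.2⟩
  inj' y z hyz := by
    have := e.injective (Subtype.ext congr($hyz.1))
    exact Subtype.ext congr($this.1)

theorem atLeast_preserved_general {CN RN D D' : Type}
    (I : Interp CN RN D) (I' : Interp CN RN D') (Z : D → D' → Prop)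
    (hZ : IsComparisonQ I I' Z)
    (C : SP CN RN)
    (hpres : ∀ x x', Z x x' → C.sem I x → C.sem I' x') :
    ∀ (n : ℕ) (r : RN) (x : D) (x' : D'), Z x x' →
      AtLeast n {y | I.rI r x y ∧ C.sem I y} →
      AtLeast n {y' | I'.rI r x' y' ∧ C.sem I' y'} := by
  intro n r x x' hxx'
  obtain ⟨h, hZh⟩ := hZ.2.2.2 r x x' hxx'
  exact AtLeast.of_embedding (h.toEmbedding.restrictAnd fun y => hpres _ _ (hZh y))

/-- Concepts `≥ n r.C` with `C` semi-positive are preserved by comparisons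
satisfying the counting condition. -/
theorem atLeast_preserved {CN RN D D' : Type} [Nonempty D] [Nonempty D']
    (I : Interp CN RN D) (I' : Interp CN RN D') (Z : D → D' → Prop)
    (hZ : IsComparisonQ I I' Z)
    (C : SP CN RN)
    (hpres : ∀ x x', Z x x' → C.sem I x → C.sem I' x') :
    ∀ (n : ℕ) (r : RN) (x : D) (x' : D'), Z x x' →
      AtLeast n {y | I.rI r x y ∧ C.sem I y} →
      AtLeast n {y' | I'.rI r x' y' ∧ C.sem I' y'} :=
  atLeast_preserved_general I I' Z hZ C hpres
end

section
/- Hennessy–Milner property (forth direction for ≤ semi-positive): Let I and I' be finitely branching interpretations (for every x and role name r, the set of r-successors of x is finite). Define x ≤sp x' iff for every semi-positive concept C, x ∈ C^I implies x' ∈ C^{I'}. If x ≤sp x' and r^I(x,y), then there exists y' with r^{I'}(x',y') and y ≤sp y'. -/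
/-- `I` is finitely branching. -/
def FinBranching {CN RN D : Type} (I : Interp CN RN D) : Prop :=
  ∀ (r : RN) (x : D), {y | I.rI r x y}.Finite

/-- `x ≤sp x'`: every semi-positive concept true at `x` is true at `x'`. -/
def LeSP {CN RN D D' : Type} (I : Interp CN RN D) (I' : Interp CN RN D')
    (x : D) (x' : D') : Prop :=
  ∀ C : SP CN RN, C.sem I x → C.sem I' x'

/-! Suppose no `r`-successor `y'` of `x'` satisfies `y ≤sp y'`. Each of them is refuted by a
concept true at `y`, and as `x'` has only finitely many successors, their conjunction `C` is a
semi-positive concept. Then `∃r.C` holds at `x`, hence at `x'`, which yields an `r`-successor of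
`x'` satisfying all the refuting concepts at once. -/

theorem exists_sp_sem_and_forall_not_sem_of_finite {CN RN D D' : Type} (I : Interp CN RN D)
    (I' : Interp CN RN D') {y : D} {S : Set D'} (hS : S.Finite)
    (hsep : ∀ y' ∈ S, ¬ LeSP I I' y y') :
    ∃ C : SP CN RN, C.sem I y ∧ ∀ y' ∈ S, ¬ C.sem I' y' := by
  induction S, hS using Set.Finite.induction_on with
  | empty => exact ⟨.top, trivial, by simp⟩
  | @insert a S _ _ ih =>
    obtain ⟨C, hCy, hCS⟩ := ih fun y' hy' => hsep y' (Set.mem_insert_of_mem a hy')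
    obtain ⟨Ca, hCay, hCaa⟩ : ∃ Ca : SP CN RN, Ca.sem I y ∧ ¬ Ca.sem I' a := by
      simpa [LeSP] using hsep a (Set.mem_insert a S)
    refine ⟨.and Ca C, ⟨hCay, hCy⟩, ?_⟩
    rintro y' (rfl | hy') ⟨hCa', hC'⟩
    · exact hCaa hCa'
    · exact hCS y' hy' hC'

theorem hm_forth_general {CN RN D D' : Type}
    (I : Interp CN RN D) (I' : Interp CN RN D')
    (hfin' : FinBranching I')
    (x : D) (x' : D') (hle : LeSP I I' x x')
    (r : RN) (y : D) (hr : I.rI r x y) :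
    ∃ y', I'.rI r x' y' ∧ LeSP I I' y y' := by
  by_contra! hnone
  obtain ⟨C, hCy, hCsucc⟩ :=
    exists_sp_sem_and_forall_not_sem_of_finite I I' (hfin' r x') hnone
  obtain ⟨y', hry', hCy'⟩ := hle (.ex r C) ⟨y, hr, hCy⟩
  exact hCsucc y' hry' hCy'

/-- Hennessy–Milner, forth direction: in finitely branching interpretations,
if `x ≤sp x'` and `r^I(x,y)` then some `r`-successor `y'` of `x'` satisfies
`y ≤sp y'`. -/
theorem hm_forth {CN RN D D' : Type} [Nonempty D] [Nonempty D']
    (I : Interp CN RN D) (I' : Interp CN RN D')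
    (hfin : FinBranching I) (hfin' : FinBranching I')
    (x : D) (x' : D') (hle : LeSP I I' x x')
    (r : RN) (y : D) (hr : I.rI r x y) :
    ∃ y', I'.rI r x' y' ∧ LeSP I I' y y' :=
  hm_forth_general I I' hfin' x x' hle r y hr
end

section
/- Hennessy–Milner property (back direction for ≤ semi-positive): Let I and I' be finitely branching interpretations, and define x ≤sp x' iff every semi-positive concept true at x in I is true at x' in I'. If x ≤sp x' and r^{I'}(x',y'), then there exists y with r^I(x,y) and y ≤sp y'. (The successor set of x is nonempty because otherwise ∀r.⊥ holds at x but not at x'; the witness is chosen using the concept ∀r.(C₁ ⊔ … ⊔ Cₙ).) -/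
theorem exists_sep_of_not_leSP {CN RN D D' : Type} {I : Interp CN RN D} {I' : Interp CN RN D'}
    {y : D} {y' : D'} (h : ¬ LeSP I I' y y') : ∃ C : SP CN RN, C.sem I y ∧ ¬ C.sem I' y' := by
  simpa [LeSP] using h

/-- The separating concept is the disjunction of concepts separating each element from `y'`
(`⊥` for the empty set). -/
theorem SP.exists_sep_of_finite {CN RN D D' : Type} {I : Interp CN RN D} {I' : Interp CN RN D'}
    {S : Set D} (hS : S.Finite) {y' : D'} (h : ∀ y ∈ S, ¬ LeSP I I' y y') :
    ∃ C : SP CN RN, (∀ y ∈ S, C.sem I y) ∧ ¬ C.sem I' y' := by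
  induction S, hS using Set.Finite.induction_on with
  | empty => exact ⟨.bot, by simp, id⟩
  | @insert a S _ _ ih =>
    obtain ⟨Ca, hCa, hCa'⟩ := exists_sep_of_not_leSP (h a (Set.mem_insert a S))
    obtain ⟨CS, hCS, hCS'⟩ := ih fun y hy => h y (Set.mem_insert_of_mem a hy)
    refine ⟨.or Ca CS, ?_, fun hor => hor.elim hCa' hCS'⟩
    rintro y (rfl | hy)
    · exact Or.inl hCa
    · exact Or.inr (hCS y hy)

theorem hm_back_general {CN RN D D' : Type}
    (I : Interp CN RN D) (I' : Interp CN RN D')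
    (hfin : FinBranching I)
    (x : D) (x' : D') (hle : LeSP I I' x x')
    (r : RN) (y' : D') (hr' : I'.rI r x' y') :
    ∃ y, I.rI r x y ∧ LeSP I I' y y' := by
  by_contra! hno
  obtain ⟨C, hC, hC'⟩ := SP.exists_sep_of_finite (hfin r x) hno
  exact hC' (hle (.all r C) hC y' hr')

/-- Hennessy–Milner, back direction: in finitely branching interpretations,
if `x ≤sp x'` and `r^{I'}(x',y')` then some `r`-successor `y` of `x` satisfies
`y ≤sp y'`. -/
theorem hm_back {CN RN D D' : Type} [Nonempty D] [Nonempty D']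
    (I : Interp CN RN D) (I' : Interp CN RN D')
    (hfin : FinBranching I) (hfin' : FinBranching I')
    (x : D) (x' : D') (hle : LeSP I I' x x')
    (r : RN) (y' : D') (hr' : I'.rI r x' y') :
    ∃ y, I.rI r x y ∧ LeSP I I' y y' :=
  hm_back_general I I' hfin x x' hle r y' hr'
end

section
/- Counting Hennessy–Milner lemma: Let I and I' be finitely branching interpretations and suppose x ≤sp x' where semi-positive concepts include the graded constructors (≥ n r.C) and (≤ n r.(¬C)) for semi-positive C. Then for every role name r, the sets S = {y | r^I(x,y)} and S' = {y' | r^{I'}(x',y')} have equal finite cardinality. (If #S > #S', the concept ≥ #S r.⊤ distinguishes x from x'; if #S < #S', the concept ≤ #S r.(¬⊥) does.) -/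
/-- Semi-positive concepts with graded constructors `≥ n r.C` and
`≤ n r.(¬C)`. -/
inductive SPQ (CN RN : Type) : Type where
  | top : SPQ CN RN
  | bot : SPQ CN RN
  | atom : CN → SPQ CN RN
  | or : SPQ CN RN → SPQ CN RN → SPQ CN RN
  | and : SPQ CN RN → SPQ CN RN → SPQ CN RN
  | ex : RN → SPQ CN RN → SPQ CN RN
  | all : RN → SPQ CN RN → SPQ CN RN
  | ge : ℕ → RN → SPQ CN RN → SPQ CN RN
  | leNeg : ℕ → RN → SPQ CN RN → SPQ CN RN

def SPQ.sem {CN RN D : Type} (I : Interp CN RN D) : SPQ CN RN → D → Prop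
  | .top => fun _ => True
  | .bot => fun _ => False
  | .atom A => I.cI A
  | .or C₁ C₂ => fun x => C₁.sem I x ∨ C₂.sem I x
  | .and C₁ C₂ => fun x => C₁.sem I x ∧ C₂.sem I x
  | .ex r C => fun x => ∃ y, I.rI r x y ∧ C.sem I y
  | .all r C => fun x => ∀ y, I.rI r x y → C.sem I y
  | .ge n r C => fun x => AtLeast n {y | I.rI r x y ∧ C.sem I y}
  | .leNeg n r C => fun x => ¬ AtLeast (n + 1) {y | I.rI r x y ∧ ¬ C.sem I y}

def LeSPQ {CN RN D D' : Type} (I : Interp CN RN D) (I' : Interp CN RN D')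
    (x : D) (x' : D') : Prop :=
  ∀ C : SPQ CN RN, C.sem I x → C.sem I' x'

/-!
At a finitely branching element the semi-positive concepts `≥ n r.⊤` and `≤ n r.(¬⊥)` say
exactly `n ≤ #S` and `#S ≤ n` for the `r`-successor set `S`. Taking `n = #S` at `x` and
transferring both concepts along `x ≤sp x'` gives `#S ≤ #S'` and `#S' ≤ #S`.
-/

lemma atLeast_iff_nonempty_embedding {α : Type} {n : ℕ} {S : Set α} :
    AtLeast n S ↔ Nonempty (Fin n ↪ S) :=
  ⟨fun ⟨f, hf⟩ => ⟨f.codRestrict S hf⟩,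
    fun ⟨e⟩ => ⟨e.trans (Function.Embedding.subtype _), fun i => (e i).2⟩⟩

lemma atLeast_iff_le_ncard {α : Type} {n : ℕ} {S : Set α} (hS : S.Finite) :
    AtLeast n S ↔ n ≤ S.ncard := by
  have := hS.to_subtype
  rw [atLeast_iff_nonempty_embedding, ← Nat.card_coe_set_eq, ← Fin.nonempty_embedding_iff]
  exact (Equiv.embeddingCongr (Equiv.refl _) (Finite.equivFin S)).nonempty_congr

section Counting

variable {CN RN D : Type} {I : Interp CN RN D}

lemma SPQ.sem_ge_top (n : ℕ) (r : RN) (x : D) :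
    (SPQ.ge n r .top).sem I x ↔ AtLeast n {y | I.rI r x y} := by
  simp [SPQ.sem]

lemma SPQ.sem_leNeg_bot (n : ℕ) (r : RN) (x : D) :
    (SPQ.leNeg n r .bot).sem I x ↔ ¬ AtLeast (n + 1) {y | I.rI r x y} := by
  simp [SPQ.sem]

lemma FinBranching.sem_ge_top_iff (hfin : FinBranching I) (n : ℕ) (r : RN) (x : D) :
    (SPQ.ge n r .top).sem I x ↔ n ≤ {y | I.rI r x y}.ncard := by
  rw [SPQ.sem_ge_top, atLeast_iff_le_ncard (hfin r x)]

lemma FinBranching.sem_leNeg_bot_iff (hfin : FinBranching I) (n : ℕ) (r : RN) (x : D) :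
    (SPQ.leNeg n r .bot).sem I x ↔ {y | I.rI r x y}.ncard ≤ n := by
  rw [SPQ.sem_leNeg_bot, atLeast_iff_le_ncard (hfin r x)]
  omega

end Counting

theorem counting_hm_general {CN RN D D' : Type}
    (I : Interp CN RN D) (I' : Interp CN RN D')
    (hfin : FinBranching I) (hfin' : FinBranching I')
    (x : D) (x' : D') (hle : LeSPQ I I' x x') :
    ∀ r : RN, {y | I.rI r x y}.ncard = {y' | I'.rI r x' y'}.ncard := by
  intro r
  set n := {y | I.rI r x y}.ncard
  apply le_antisymm
  · exact (hfin'.sem_ge_top_iff n r x').1 (hle _ ((hfin.sem_ge_top_iff n r x).2 le_rfl))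
  · exact (hfin'.sem_leNeg_bot_iff n r x').1 (hle _ ((hfin.sem_leNeg_bot_iff n r x).2 le_rfl))

/-- Counting Hennessy–Milner lemma: if `x ≤sp x'` (w.r.t. graded
semi-positive concepts) in finitely branching interpretations, then for each
role name `r` the successor sets of `x` and `x'` have the same finite
cardinality. -/
theorem counting_hm {CN RN D D' : Type} [Nonempty D] [Nonempty D']
    (I : Interp CN RN D) (I' : Interp CN RN D')
    (hfin : FinBranching I) (hfin' : FinBranching I')
    (x : D) (x' : D') (hle : LeSPQ I I' x x') :
    ∀ r : RN, {y | I.rI r x y}.ncard = {y' | I'.rI r x' y'}.ncard :=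
  counting_hm_general I I' hfin hfin' x x' hle
end

section
/- Symmetrization with counting: Let I, I' be finitely branching interpretations, let r be a role name, and let S = {y | r^I(x,y)}, S' = {y' | r^{I'}(x',y')} be finite sets of equal cardinality. Suppose there exists a bijection h : S → S' with h(y) = y' implying y ≤sp y', and a bijection h' : S' → S with h'(y') = y implying y' ≤sp y. Then there exists a bijection h₂ : S → S' such that h₂(y) = y' implies y ≡sp y' (i.e., y ≤sp y' and y' ≤sp y). -/
/-!
The composite `h' ∘ h` is a permutation `f` of the finite set `S` with `y ≤sp f y` for all `y`.
Every point is periodic under an injective self-map of a finite set, so the chain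
`f y ≤sp f² y ≤sp ⋯ ≤sp fⁿ y = y` closes up and gives `f y ≤sp y`.
Hence `h y ≤sp h' (h y) ≤sp y`, and `h` itself is already `≡sp`-preserving.
-/

namespace Function

variable {β : Type*} {R : β → β → Prop} [IsTrans β R] {f : β → β}

theorem rel_iterate_succ_of_forall_rel_apply (hf : ∀ x, R x (f x)) (k : ℕ) (x : β) :
    R x (f^[k + 1] x) := by
  induction k generalizing x with
  | zero => exact hf x
  | succ k ih =>
    rw [iterate_succ_apply]
    exact _root_.trans_of R (hf x) (ih (f x))

theorem Injective.rel_apply_self_of_forall_rel_apply [Finite β] (hinj : Injective f)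
    (hf : ∀ x, R x (f x)) (x : β) : R (f x) x := by
  obtain ⟨n, hn, hper⟩ := hinj.mem_periodicPts x
  obtain ⟨m, rfl⟩ := Nat.exists_eq_succ_of_ne_zero hn.ne'
  -- doubling the period `m + 1` keeps the number of steps from `f x` back to `x` positive
  have hloop : f^[2 * m + 1] (f x) = x := by
    rw [← iterate_succ_apply, show (2 * m + 1).succ = m.succ * 2 by omega]
    exact (hper.mul_const 2).eq
  simpa only [hloop] using rel_iterate_succ_of_forall_rel_apply hf (2 * m) (f x)

end Function

theorem symmetrization_with_counting_general {α : Type} (R : α → α → Prop)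
    (htrans : ∀ a b c, R a b → R b c → R a c)
    (S S' : Set α) (hS : S.Finite)
    (h : {y // y ∈ S} ≃ {y' // y' ∈ S'}) (hh : ∀ y, R y.1 (h y).1)
    (h' : {y' // y' ∈ S'} ≃ {y // y ∈ S}) (hh' : ∀ y', R y'.1 (h' y').1) :
    ∃ h₂ : {y // y ∈ S} ≃ {y' // y' ∈ S'},
      ∀ y, R y.1 (h₂ y).1 ∧ R (h₂ y).1 y.1 := by
  have : Finite {y // y ∈ S} := hS.to_subtype
  have : IsTrans {y // y ∈ S} (fun a b => R a.1 b.1) := ⟨fun _ _ _ => htrans _ _ _⟩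
  have hround : ∀ y, R (h' (h y)).1 y.1 :=
    (h.trans h').injective.rel_apply_self_of_forall_rel_apply (R := fun a b => R a.1 b.1)
      (fun y => htrans _ _ _ (hh y) (hh' (h y)))
  exact ⟨h, fun y => ⟨hh y, htrans _ _ _ (hh' (h y)) (hround y)⟩⟩

/-- Symmetrization with counting: a purely combinatorial fact. Given finite
sets `S`, `S'` (subsets of a common type carrying a preorder-like relation
`R`, playing the role of `≤sp` on the disjoint union of the two domains),
and bijections `h : S → S'` and `h' : S' → S` that are increasing w.r.t. `R`,
there is a bijection `h₂ : S → S'` mapping each element to an `R`-equivalent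
one. -/
theorem symmetrization_with_counting {α : Type} (R : α → α → Prop)
    (hrefl : ∀ a, R a a) (htrans : ∀ a b c, R a b → R b c → R a c)
    (S S' : Set α) (hS : S.Finite) (hS' : S'.Finite)
    (h : {y // y ∈ S} ≃ {y' // y' ∈ S'}) (hh : ∀ y, R y.1 (h y).1)
    (h' : {y' // y' ∈ S'} ≃ {y // y ∈ S}) (hh' : ∀ y', R y'.1 (h' y').1) :
    ∃ h₂ : {y // y ∈ S} ≃ {y' // y' ∈ S'},
      ∀ y, R y.1 (h₂ y).1 ∧ R (h₂ y).1 y.1 :=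
  symmetrization_with_counting_general R htrans S S' hS h hh h' hh'
end
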